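/- Let ν > 0 and d ≥ 1 an integer. For every ε > 0 there exists Γ_0 ≥ (d+1)/ν such that for all Γ ≥ Γ_0 and all real p ∈ [1, ∞): max( Γ^{dp} exp(−νpΓ), (2/Γ^p) ∫_Γ^∞ exp(−νpr) r^{(d+1)p−1} dr ) ≤ ε^p. -/

import Mathlib

/-!
Both terms are `p`-th powers of quantities that tend to `0` as `Γ → ∞` independently of `p`.
The first is `(Γ ^ d * exp (-ν Γ)) ^ p`. For the second, once `r ^ (d + 1) * exp (-ν r / 2) ≤ 1`
on `[Γ, ∞)`, the integrand is at most `exp (-ν p r / 2)`, whose tail integral is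
`exp (-ν p Γ / 2) / (ν p / 2)`; multiplying by `2 / Γ ^ p ≤ 2` and using
`4 / ν ≤ max 1 (4 / ν) ^ p` bounds the second term by
`(max 1 (4 / ν) * exp (-ν Γ / 2)) ^ p`.
-/

open Real MeasureTheory Set Filter

lemma rpow_mul_exp_neg_mul_rpow {x : ℝ} (hx : 0 ≤ x) (a b p : ℝ) :
    (x ^ a * exp (-b * x)) ^ p = x ^ (a * p) * exp (-b * p * x) := by
  rw [mul_rpow (rpow_nonneg hx a) (exp_nonneg _), ← rpow_mul hx, ← exp_mul]
  ring_nf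

lemma setIntegral_Ioi_le_of_le_exp_neg_mul {f : ℝ → ℝ} {a c : ℝ} (hc : 0 < c)
    (hf₀ : ∀ x ∈ Ioi a, 0 ≤ f x) (hf : ∀ x ∈ Ioi a, f x ≤ exp (-c * x)) :
    ∫ x in Ioi a, f x ≤ exp (-c * a) / c := calc
  ∫ x in Ioi a, f x ≤ ∫ x in Ioi a, exp (-c * x) :=
    integral_mono_of_nonneg (ae_restrict_of_forall_mem measurableSet_Ioi hf₀)
      (integrableOn_exp_mul_Ioi (neg_lt_zero.2 hc) a)
      (ae_restrict_of_forall_mem measurableSet_Ioi hf)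
  _ = exp (-c * a) / c := by
    rw [integral_exp_mul_Ioi (neg_lt_zero.2 hc), neg_div_neg_eq]

lemma exp_neg_mul_mul_rpow_le {ν a p r : ℝ} (hr : 1 ≤ r) (hp : 0 ≤ p)
    (hdecay : r ^ a * exp (-(ν / 2) * r) ≤ 1) :
    exp (-ν * p * r) * r ^ (a * p - 1) ≤ exp (-(ν * p / 2) * r) := by
  have hr₀ : 0 ≤ r := zero_le_one.trans hr
  have hhalf : r ^ a * exp (-ν * r) ≤ exp (-(ν / 2) * r) := calc
    r ^ a * exp (-ν * r) = r ^ a * exp (-(ν / 2) * r) * exp (-(ν / 2) * r) := by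
      rw [mul_assoc, ← exp_add]; ring_nf
    _ ≤ exp (-(ν / 2) * r) := mul_le_of_le_one_left (exp_nonneg _) hdecay
  calc exp (-ν * p * r) * r ^ (a * p - 1)
      ≤ r ^ (a * p) * exp (-ν * p * r) := by
        rw [mul_comm]
        exact mul_le_mul_of_nonneg_right (rpow_le_rpow_of_exponent_le hr (by linarith))
          (exp_nonneg _)
    _ = (r ^ a * exp (-ν * r)) ^ p := (rpow_mul_exp_neg_mul_rpow hr₀ a ν p).symm
    _ ≤ exp (-(ν / 2) * r) ^ p := rpow_le_rpow (by positivity) hhalf hp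
    _ = exp (-(ν * p / 2) * r) := by rw [← exp_mul]; ring_nf

lemma two_div_rpow_mul_exp_div_le {ν Γ p : ℝ} (hν : 0 < ν) (hΓ : 1 ≤ Γ) (hp : 1 ≤ p) :
    2 / Γ ^ p * (exp (-(ν * p / 2) * Γ) / (ν * p / 2))
      ≤ (max 1 (4 / ν) * exp (-(ν / 2) * Γ)) ^ p := by
  have hp₀ : 0 < p := zero_lt_one.trans_le hp
  have hΓp : 1 ≤ Γ ^ p := one_le_rpow hΓ hp₀.le
  have hcoeff : 4 / (ν * (p * Γ ^ p)) ≤ 4 / ν :=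
    div_le_div_of_nonneg_left (by norm_num) hν (le_mul_of_one_le_right hν.le (by nlinarith))
  have hmax : 4 / ν ≤ max 1 (4 / ν) ^ p :=
    (le_max_right _ _).trans (self_le_rpow_of_one_le (le_max_left _ _) hp)
  calc 2 / Γ ^ p * (exp (-(ν * p / 2) * Γ) / (ν * p / 2))
      = 4 / (ν * (p * Γ ^ p)) * exp (-(ν / 2) * Γ) ^ p := by
        rw [← exp_mul]
        field_simp
        ring_nf
    _ ≤ max 1 (4 / ν) ^ p * exp (-(ν / 2) * Γ) ^ p :=
        mul_le_mul_of_nonneg_right (hcoeff.trans hmax) (by positivity)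
    _ = (max 1 (4 / ν) * exp (-(ν / 2) * Γ)) ^ p :=
        (mul_rpow (by positivity) (exp_nonneg _)).symm

lemma eventually_forall_max_le_rpow {ν : ℝ} (hν : 0 < ν) (d : ℝ) {ε : ℝ} (hε : 0 < ε) :
    ∀ᶠ Γ in atTop, ∀ p : ℝ, 1 ≤ p →
      max (Γ ^ (d * p) * exp (-ν * p * Γ))
        (2 / Γ ^ p * ∫ r in Ioi Γ, exp (-ν * p * r) * r ^ ((d + 1) * p - 1)) ≤ ε ^ p := by
  have hdecay₁ : ∀ᶠ Γ in atTop, Γ ^ d * exp (-ν * Γ) ≤ ε :=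
    (tendsto_rpow_mul_exp_neg_mul_atTop_nhds_zero d ν hν).eventually_le_const hε
  have hdecay₂ : ∀ᶠ Γ in atTop, ∀ r, Γ ≤ r → r ^ (d + 1) * exp (-(ν / 2) * r) ≤ 1 :=
    eventually_forall_ge_atTop.2 <|
      (tendsto_rpow_mul_exp_neg_mul_atTop_nhds_zero (d + 1) (ν / 2)
        (by positivity)).eventually_le_const one_pos
  have hdecay₃ : ∀ᶠ Γ in atTop, max 1 (4 / ν) * exp (-(ν / 2) * Γ) ≤ ε := by
    have h : Tendsto (fun Γ ↦ max 1 (4 / ν) * exp (-(ν / 2) * Γ)) atTop (nhds 0) := by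
      simpa using (tendsto_exp_comp_nhds_zero.2 (tendsto_id.const_mul_atTop_of_neg
        (by linarith : -(ν / 2) < 0))).const_mul (max 1 (4 / ν))
    exact h.eventually_le_const hε
  filter_upwards [hdecay₁, hdecay₂, hdecay₃, eventually_ge_atTop 1]
    with Γ h₁ h₂ h₃ hΓ p hp
  have hΓ₀ : 0 ≤ Γ := zero_le_one.trans hΓ
  have hp₀ : 0 ≤ p := zero_le_one.trans hp
  refine max_le ?_ ?_
  · rw [← rpow_mul_exp_neg_mul_rpow hΓ₀]
    exact rpow_le_rpow (by positivity) h₁ hp₀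
  have hintegrand₀ : ∀ r ∈ Ioi Γ, 0 ≤ exp (-ν * p * r) * r ^ ((d + 1) * p - 1) :=
    fun r hr ↦ mul_nonneg (exp_nonneg _) (rpow_nonneg (hΓ₀.trans hr.le) _)
  have hintegrand : ∀ r ∈ Ioi Γ,
      exp (-ν * p * r) * r ^ ((d + 1) * p - 1) ≤ exp (-(ν * p / 2) * r) :=
    fun r hr ↦ exp_neg_mul_mul_rpow_le (hΓ.trans hr.le) hp₀ (h₂ r hr.le)
  calc 2 / Γ ^ p * ∫ r in Ioi Γ, exp (-ν * p * r) * r ^ ((d + 1) * p - 1)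
      ≤ 2 / Γ ^ p * (exp (-(ν * p / 2) * Γ) / (ν * p / 2)) :=
        mul_le_mul_of_nonneg_left
          (setIntegral_Ioi_le_of_le_exp_neg_mul (by positivity) hintegrand₀ hintegrand)
          (by positivity)
    _ ≤ (max 1 (4 / ν) * exp (-(ν / 2) * Γ)) ^ p := two_div_rpow_mul_exp_div_le hν hΓ hp
    _ ≤ ε ^ p := rpow_le_rpow (by positivity) h₃ hp₀

theorem stmt3_general (ν : ℝ) (hν : 0 < ν) (d : ℕ) :
    ∀ ε > (0 : ℝ), ∃ Γ₀ : ℝ, ((d : ℝ) + 1) / ν ≤ Γ₀ ∧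
      ∀ Γ ≥ Γ₀, ∀ p : ℝ, 1 ≤ p →
        max (Γ ^ ((d : ℝ) * p) * Real.exp (-ν * p * Γ))
          (2 / Γ ^ p *
            ∫ r in Set.Ioi Γ, Real.exp (-ν * p * r) * r ^ (((d : ℝ) + 1) * p - 1))
        ≤ ε ^ p := by
  intro ε hε
  obtain ⟨A, hA⟩ := eventually_atTop.1 (eventually_forall_max_le_rpow hν d hε)
  exact ⟨max A ((d + 1) / ν), le_max_right _ _, fun Γ hΓ ↦ hA Γ (le_of_max_le_left hΓ)⟩

theorem stmt3 (ν : ℝ) (hν : 0 < ν) (d : ℕ) (hd : 1 ≤ d) :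
    ∀ ε > (0 : ℝ), ∃ Γ₀ : ℝ, ((d : ℝ) + 1) / ν ≤ Γ₀ ∧
      ∀ Γ ≥ Γ₀, ∀ p : ℝ, 1 ≤ p →
        max (Γ ^ ((d : ℝ) * p) * Real.exp (-ν * p * Γ))
          (2 / Γ ^ p *
            ∫ r in Set.Ioi Γ, Real.exp (-ν * p * r) * r ^ (((d : ℝ) + 1) * p - 1))
        ≤ ε ^ p :=
  stmt3_general ν hν d
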